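/- arXiv:2008.09790 — 7 statements merged into one kernel-verified Lean document; each statement's English description precedes it below -/
import Mathlib

section
/- Let $K$ be a stochastic matrix on a finite state space $E = A \cup B$ with invariant probability $\pi_0$ such that $\pi_0(A) > 0$, and suppose $I - K_A$ and $I - K_B$ are invertible. Then the conditional distribution $\pi_{0|A} := \pi_0^A / \pi_0(A)$ satisfies $\pi_{0|A} = \pi_{0|A} K_A + \pi_{0|A} K_{AB} (I - K_B)^{-1} K_{BA}$. -/
/-!
Stationarity of `π₀` splits along `E = A ⊕ B` into `π_A = π_A K_A + π_B K_{BA}` and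
`π_B (I - K_B) = π_A K_{AB}`. Solving the second equation for `π_B` and substituting into the
first shows that `π_A` is fixed by the stochastic complement `K_A + K_{AB} (I - K_B)⁻¹ K_{BA}`;
the fixed-point equation is linear, so it survives normalization.
-/

open Matrix

namespace Matrix

variable {m n R : Type*} [Fintype m] [Fintype n] [DecidableEq n] [CommRing R]

noncomputable def stochasticComplement (KA : Matrix m m R) (KAB : Matrix m n R)
    (KBA : Matrix n m R) (KB : Matrix n n R) : Matrix m m R :=
  KA + KAB * (1 - KB)⁻¹ * KBA

theorem vecMul_stochasticComplement_of_vecMul_fromBlocks_eq {KA : Matrix m m R}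
    {KAB : Matrix m n R} {KBA : Matrix n m R} {KB : Matrix n n R} (hUB : IsUnit (1 - KB))
    {x : m ⊕ n → R} (hx : x ᵥ* fromBlocks KA KAB KBA KB = x) :
    (x ∘ Sum.inl) ᵥ* stochasticComplement KA KAB KBA KB = x ∘ Sum.inl := by
  set u := x ∘ Sum.inl
  set v := x ∘ Sum.inr
  rw [vecMul_fromBlocks] at hx
  have hu : u ᵥ* KA + v ᵥ* KBA = u := congrArg (· ∘ Sum.inl) hx
  have hv : u ᵥ* KAB + v ᵥ* KB = v := congrArg (· ∘ Sum.inr) hx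
  have hv' : v = (u ᵥ* KAB) ᵥ* (1 - KB)⁻¹ := by
    have h : v ᵥ* (1 - KB) = u ᵥ* KAB := by
      rw [vecMul_sub, vecMul_one, sub_eq_iff_eq_add]
      exact hv.symm
    rw [← h, vecMul_vecMul, mul_nonsing_inv _ ((isUnit_iff_isUnit_det _).mp hUB), vecMul_one]
  rw [stochasticComplement, vecMul_add, ← vecMul_vecMul, ← vecMul_vecMul, ← hv', hu]

end Matrix

theorem stmt4_general {A B : Type*} [Fintype A] [Fintype B] [DecidableEq B]
    (K : Matrix (A ⊕ B) (A ⊕ B) ℝ)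
    (π0 : A ⊕ B → ℝ) (hstat : π0 ᵥ* K = π0)
    (KA : Matrix A A ℝ) (hKA : ∀ x y, KA x y = K (Sum.inl x) (Sum.inl y))
    (KAB : Matrix A B ℝ) (hKAB : ∀ x y, KAB x y = K (Sum.inl x) (Sum.inr y))
    (KBA : Matrix B A ℝ) (hKBA : ∀ y x, KBA y x = K (Sum.inr y) (Sum.inl x))
    (KB : Matrix B B ℝ) (hKB : ∀ y z, KB y z = K (Sum.inr y) (Sum.inr z))
    (hUB : IsUnit (1 - KB))
    (πc : A → ℝ) (hπc : πc = (∑ x : A, π0 (Sum.inl x))⁻¹ • fun x => π0 (Sum.inl x)) :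
    πc = πc ᵥ* KA + ((πc ᵥ* KAB) ᵥ* (1 - KB)⁻¹) ᵥ* KBA := by
  have hK : K = fromBlocks KA KAB KBA KB := by
    ext (i | i) (j | j) <;> simp [hKA, hKAB, hKBA, hKB]
  have hfix := vecMul_stochasticComplement_of_vecMul_fromBlocks_eq hUB (hK ▸ hstat)
  rw [stochasticComplement, vecMul_add, ← vecMul_vecMul, ← vecMul_vecMul] at hfix
  rw [hπc, smul_vecMul, smul_vecMul, smul_vecMul, smul_vecMul, ← smul_add]
  exact congrArg _ hfix.symm

/-- For a stochastic matrix on `E = A ⊕ B` with invariant probability `π₀` such that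
`π₀(A) > 0`, if `I - K_A` and `I - K_B` are invertible, then the conditional
distribution `π_{0|A}` satisfies
`π_{0|A} = π_{0|A} K_A + π_{0|A} K_{AB} (I - K_B)⁻¹ K_{BA}`. -/
theorem stmt4 {A B : Type*} [Fintype A] [Fintype B] [DecidableEq A] [DecidableEq B]
    [Nonempty A] [Nonempty B]
    (K : Matrix (A ⊕ B) (A ⊕ B) ℝ)
    (hK0 : ∀ i j, 0 ≤ K i j) (hK1 : ∀ i, ∑ j, K i j = 1)
    (π0 : A ⊕ B → ℝ) (hπnn : ∀ i, 0 ≤ π0 i) (hπ1 : ∑ i, π0 i = 1)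
    (hstat : π0 ᵥ* K = π0)
    (hA : 0 < ∑ x : A, π0 (Sum.inl x))
    (KA : Matrix A A ℝ) (hKA : ∀ x y, KA x y = K (Sum.inl x) (Sum.inl y))
    (KAB : Matrix A B ℝ) (hKAB : ∀ x y, KAB x y = K (Sum.inl x) (Sum.inr y))
    (KBA : Matrix B A ℝ) (hKBA : ∀ y x, KBA y x = K (Sum.inr y) (Sum.inl x))
    (KB : Matrix B B ℝ) (hKB : ∀ y z, KB y z = K (Sum.inr y) (Sum.inr z))
    (hUA : IsUnit (1 - KA)) (hUB : IsUnit (1 - KB))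
    (πc : A → ℝ) (hπc : πc = (∑ x : A, π0 (Sum.inl x))⁻¹ • fun x => π0 (Sum.inl x)) :
    πc = πc ᵥ* KA + ((πc ᵥ* KAB) ᵥ* (1 - KB)⁻¹) ᵥ* KBA :=
  stmt4_general K π0 hstat KA hKA KAB hKAB KBA hKBA KB hKB hUB πc hπc
end

section
/- Let $K$ be a stochastic matrix on finite $E = A \cup B$ with blocks $K_A, K_{AB}$, such that $I - K_A$ is invertible. For a probability vector $\pi$ on $A$, define the $\pi$-return kernel $K^\pi = K_A + (K_{AB}\mathbf{1}_B) \otimes \pi$ (a stochastic matrix on $A$). Then the probability vector $R(\pi) := \frac{\pi (I - K_A)^{-1}}{\pi (I - K_A)^{-1} \mathbf{1}_A}$ is stationary for $K^\pi$, i.e., $R(\pi) K^\pi = R(\pi)$. -/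
open Matrix BigOperators

/-! With `v = π(I - K_A)⁻¹` we have `v(I - K_A) = π`, so `v K_A = v - π`, and the mass that `v`
sends out of `A` is `v ⬝ (I - K_A)𝟙 = π ⬝ 𝟙 = 1`; it is returned along `π`, which restores `v`.
Normalising `v` does not affect stationarity. -/

namespace Matrix

variable {R n o : Type*} [Fintype n] [DecidableEq n]

/-- `K^π = K_A + (K_{AB}𝟙_B) ⊗ π`, with the exit vector `K_{AB}𝟙_B` written as `(I - K_A)𝟙`,
which it equals when `K` is stochastic. -/
def returnKernel [Ring R] (M : Matrix n n R) (π : n → R) : Matrix n n R :=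
  M + vecMulVec ((1 - M) *ᵥ 1) π

theorem toBlocks₁₂_mulVec_one [Fintype o] [Ring R] {K : Matrix (n ⊕ o) (n ⊕ o) R}
    (hK : K *ᵥ 1 = 1) : K.toBlocks₁₂ *ᵥ 1 = (1 - K.toBlocks₁₁) *ᵥ 1 := by
  have hrows := congrArg (· ∘ Sum.inl) hK
  rw [← fromBlocks_toBlocks K, fromBlocks_mulVec] at hrows
  simp only [Sum.elim_comp_inl, Pi.one_comp] at hrows
  rw [sub_mulVec, one_mulVec]
  exact eq_sub_of_add_eq' hrows

theorem vecMul_returnKernel_of_vecMul_one_sub_eq [CommRing R] {M : Matrix n n R}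
    {π v : n → R} (hπ : ∑ x, π x = 1) (hv : v ᵥ* (1 - M) = π) :
    v ᵥ* returnKernel M π = v := by
  have hvM : v ᵥ* M = v - π := by
    rw [← hv, vecMul_sub, vecMul_one, sub_sub_cancel]
  have hexit : v ⬝ᵥ ((1 - M) *ᵥ 1) = 1 := by
    rw [dotProduct_mulVec, hv, dotProduct_one, hπ]
  rw [returnKernel, vecMul_add, hvM, vecMul_vecMulVec, hexit, one_smul, sub_add_cancel]

end Matrix

theorem stmt7_general {A B : Type*} [Fintype A] [Fintype B] [DecidableEq A]
    (K : Matrix (A ⊕ B) (A ⊕ B) ℝ)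
    (hK1 : ∀ i, ∑ j, K i j = 1)
    (KA : Matrix A A ℝ) (hKA : ∀ x y, KA x y = K (Sum.inl x) (Sum.inl y))
    (KAB : Matrix A B ℝ) (hKAB : ∀ x y, KAB x y = K (Sum.inl x) (Sum.inr y))
    (hU : IsUnit (1 - KA))
    (π : A → ℝ) (hπ1 : ∑ x, π x = 1)
    (Kπ : Matrix A A ℝ) (hKπ : ∀ x y, Kπ x y = KA x y + (∑ b, KAB x b) * π y)
    (Rπ : A → ℝ)
    (hRπ : Rπ = (∑ x, (π ᵥ* (1 - KA)⁻¹) x)⁻¹ • (π ᵥ* (1 - KA)⁻¹)) :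
    Rπ ᵥ* Kπ = Rπ := by
  have hKA' : KA = K.toBlocks₁₁ := ext hKA
  have hKAB' : KAB = K.toBlocks₁₂ := ext hKAB
  have hexit : KAB *ᵥ 1 = (1 - KA) *ᵥ 1 := by
    rw [hKA', hKAB']
    exact toBlocks₁₂_mulVec_one (funext fun i => by simp [mulVec, dotProduct, hK1])
  have hKπ' : Kπ = returnKernel KA π := by
    ext x y
    simp [hKπ, returnKernel, ← hexit, vecMulVec_apply, mulVec, dotProduct]
  have hresolvent : (π ᵥ* (1 - KA)⁻¹) ᵥ* (1 - KA) = π := by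
    rw [vecMul_vecMul, nonsing_inv_mul _ ((isUnit_iff_isUnit_det _).mp hU), vecMul_one]
  rw [hRπ, smul_vecMul, hKπ', vecMul_returnKernel_of_vecMul_one_sub_eq hπ1 hresolvent]

/-- The probability vector `R(π) = π(I-K_A)⁻¹ / π(I-K_A)⁻¹𝟙` is stationary for the
`π`-return kernel `K^π = K_A + (K_{AB}𝟙_B) ⊗ π`. -/
theorem stmt7 {A B : Type*} [Fintype A] [Fintype B] [DecidableEq A] [Nonempty A] [Nonempty B]
    (K : Matrix (A ⊕ B) (A ⊕ B) ℝ)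
    (hK0 : ∀ i j, 0 ≤ K i j) (hK1 : ∀ i, ∑ j, K i j = 1)
    (KA : Matrix A A ℝ) (hKA : ∀ x y, KA x y = K (Sum.inl x) (Sum.inl y))
    (KAB : Matrix A B ℝ) (hKAB : ∀ x y, KAB x y = K (Sum.inl x) (Sum.inr y))
    (hU : IsUnit (1 - KA))
    (π : A → ℝ) (hπ0 : ∀ x, 0 ≤ π x) (hπ1 : ∑ x, π x = 1)
    (Kπ : Matrix A A ℝ) (hKπ : ∀ x y, Kπ x y = KA x y + (∑ b, KAB x b) * π y)
    (Rπ : A → ℝ)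
    (hRπ : Rπ = (∑ x, (π ᵥ* (1 - KA)⁻¹) x)⁻¹ • (π ᵥ* (1 - KA)⁻¹)) :
    Rπ ᵥ* Kπ = Rπ :=
  stmt7_general K hK1 KA hKA KAB hKAB hU π hπ1 Kπ hKπ Rπ hRπ
end

section
/- (Hill relation) Let $K$ be a stochastic matrix on finite $E = A \cup B$ with $I - K_A$ invertible, $\pi$ a probability vector on $A$, and $R(\pi) = \pi(I-K_A)^{-1} / \pi(I-K_A)^{-1}\mathbf{1}_A$. Then for any function $f : A \to \mathbb{R}$, $\mathbb{E}_\pi\left[\sum_{n=0}^{T_B - 1} f(Y_n)\right] = \frac{R(\pi) f}{R(\pi) K_{AB} \mathbf{1}_B}$, where the left-hand side equals $\pi (I - K_A)^{-1} f$. In particular, taking $f = \mathbf{1}_A$: $\mathbb{E}_\pi[T_B] = 1 / \mathbb{P}_{R(\pi)}(Y_1 \in B)$. -/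
/-!
Put `v = π (I - K_A)⁻¹`. Since `K` is stochastic, the exit probabilities `g = K_{AB} 𝟙_B` satisfy
`g = (I - K_A) 𝟙_A`, hence `v g = π 𝟙_A = 1`. The return distribution is `R(π) = v / s` with
`s = v 𝟙_A`, so `R(π) f / R(π) g = (v f / s) / (1 / s) = v f` as soon as `s ≠ 0`. Finally `s ≥ 1`:
`u = (I - K_A)⁻¹ 𝟙_A` solves `u = 𝟙 + K_A u` with `K_A` substochastic, so by the minimum principle
`u ≥ 1` and `s = π u ≥ π 𝟙_A = 1`.
-/

open Matrix

namespace Matrix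

variable {ι R : Type*} [Fintype ι] [Field R]

theorem vecMul_inv_dotProduct_mulVec [DecidableEq ι] {M : Matrix ι ι R} (hM : IsUnit M)
    (π w : ι → R) : π ᵥ* M⁻¹ ⬝ᵥ (M *ᵥ w) = π ⬝ᵥ w := by
  rw [dotProduct_mulVec, vecMul_vecMul, nonsing_inv_mul _ ((isUnit_iff_isUnit_det _).mp hM),
    vecMul_one]

theorem dotProduct_eq_div_of_dotProduct_eq_one {v g : ι → R} (hvg : v ⬝ᵥ g = 1) {c : R}
    (hc : c ≠ 0) (f : ι → R) : v ⬝ᵥ f = ((c • v) ⬝ᵥ f) / ((c • v) ⬝ᵥ g) := by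
  rw [smul_dotProduct, smul_dotProduct, hvg, smul_eq_mul, smul_eq_mul, mul_one,
    mul_div_cancel_left₀ _ hc]

section Blocks

variable {A B : Type*} [Fintype A] [Fintype B] (K : Matrix (A ⊕ B) (A ⊕ B) R)

theorem toBlocks₁₁_rowSum_add_toBlocks₁₂_rowSum (hK1 : ∀ i, ∑ j, K i j = 1) (x : A) :
    ∑ y, K.toBlocks₁₁ x y + ∑ b, K.toBlocks₁₂ x b = 1 :=
  (Fintype.sum_sum_type _).symm.trans (hK1 (Sum.inl x))

theorem one_sub_toBlocks₁₁_mulVec_one [DecidableEq A] (hK1 : ∀ i, ∑ j, K i j = 1) :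
    (1 - K.toBlocks₁₁) *ᵥ 1 = fun x => ∑ b, K.toBlocks₁₂ x b := by
  funext x
  rw [sub_mulVec, one_mulVec]
  change 1 - ∑ y, K.toBlocks₁₁ x y * 1 = _
  simp only [mul_one]
  linear_combination -K.toBlocks₁₁_rowSum_add_toBlocks₁₂_rowSum hK1 x

end Blocks

variable [LinearOrder R] [IsStrictOrderedRing R]

theorem toBlocks₁₁_rowSum_le_one {A B : Type*} [Fintype A] [Fintype B]
    {K : Matrix (A ⊕ B) (A ⊕ B) R} (hK0 : ∀ i j, 0 ≤ K i j) (hK1 : ∀ i, ∑ j, K i j = 1) (x : A) :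
    ∑ y, K.toBlocks₁₁ x y ≤ 1 := by
  have hexit : 0 ≤ ∑ b, K.toBlocks₁₂ x b := Finset.sum_nonneg fun b _ => hK0 _ _
  linarith [K.toBlocks₁₁_rowSum_add_toBlocks₁₂_rowSum hK1 x]

variable [DecidableEq ι]

theorem one_le_of_one_sub_mulVec_eq_one {P : Matrix ι ι R} (hP0 : ∀ i j, 0 ≤ P i j)
    (hP1 : ∀ i, ∑ j, P i j ≤ 1) {u : ι → R} (hu : (1 - P) *ᵥ u = 1) (i : ι) : 1 ≤ u i := by
  have : Nonempty ι := ⟨i⟩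
  obtain ⟨i₀, hmin⟩ := Finite.exists_min u
  have hfix : u i₀ = 1 + ∑ j, P i₀ j * u j := by
    rw [sub_mulVec, one_mulVec] at hu
    have h : u i₀ - ∑ j, P i₀ j * u j = 1 := congrFun hu i₀
    linarith
  have hmean : u i₀ * ∑ j, P i₀ j ≤ ∑ j, P i₀ j * u j := by
    rw [Finset.mul_sum]
    exact Finset.sum_le_sum fun j _ => by
      rw [mul_comm]; exact mul_le_mul_of_nonneg_left (hmin j) (hP0 i₀ j)
  have hrow_nonneg : 0 ≤ ∑ j, P i₀ j := Finset.sum_nonneg fun j _ => hP0 i₀ j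
  have hi₀ : 1 ≤ u i₀ := by
    by_contra! hlt
    nlinarith [hP1 i₀, mul_nonneg (sub_nonneg.2 hlt.le) (sub_nonneg.2 (hP1 i₀))]
  exact hi₀.trans (hmin i)

theorem one_le_sum_vecMul_inv_one_sub {P : Matrix ι ι R} (hP0 : ∀ i j, 0 ≤ P i j)
    (hP1 : ∀ i, ∑ j, P i j ≤ 1) (hU : IsUnit (1 - P)) {π : ι → R} (hπ0 : 0 ≤ π)
    (hπ1 : ∑ i, π i = 1) : 1 ≤ ∑ i, (π ᵥ* (1 - P)⁻¹) i := by
  have hu : (1 - P) *ᵥ ((1 - P)⁻¹ *ᵥ 1) = 1 := by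
    rw [mulVec_mulVec, mul_nonsing_inv _ ((isUnit_iff_isUnit_det _).mp hU), one_mulVec]
  calc (1 : R) = π ⬝ᵥ 1 := by rw [dotProduct_one, hπ1]
    _ ≤ π ⬝ᵥ ((1 - P)⁻¹ *ᵥ 1) := dotProduct_le_dotProduct_of_nonneg_left
        (one_le_of_one_sub_mulVec_eq_one hP0 hP1 hu) hπ0
    _ = ∑ i, (π ᵥ* (1 - P)⁻¹) i := by rw [dotProduct_mulVec, dotProduct_one]

end Matrix

theorem stmt8_general {A B : Type*} [Fintype A] [Fintype B] [DecidableEq A]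
    (K : Matrix (A ⊕ B) (A ⊕ B) ℝ)
    (hK0 : ∀ i j, 0 ≤ K i j) (hK1 : ∀ i, ∑ j, K i j = 1)
    (KA : Matrix A A ℝ) (hKA : ∀ x y, KA x y = K (Sum.inl x) (Sum.inl y))
    (KAB : Matrix A B ℝ) (hKAB : ∀ x y, KAB x y = K (Sum.inl x) (Sum.inr y))
    (hU : IsUnit (1 - KA))
    (π : A → ℝ) (hπ0 : ∀ x, 0 ≤ π x) (hπ1 : ∑ x, π x = 1)
    (Rπ : A → ℝ)
    (hRπ : Rπ = (∑ x, (π ᵥ* (1 - KA)⁻¹) x)⁻¹ • (π ᵥ* (1 - KA)⁻¹)) :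
    (∀ f : A → ℝ,
      (π ᵥ* (1 - KA)⁻¹) ⬝ᵥ f = (Rπ ⬝ᵥ f) / (Rπ ⬝ᵥ fun x => ∑ b, KAB x b)) ∧
    (π ᵥ* (1 - KA)⁻¹) ⬝ᵥ (fun _ => (1 : ℝ)) =
      1 / (Rπ ⬝ᵥ fun x => ∑ b, KAB x b) := by
  obtain rfl : KA = K.toBlocks₁₁ := Matrix.ext hKA
  obtain rfl : KAB = K.toBlocks₁₂ := Matrix.ext hKAB
  set v := π ᵥ* (1 - K.toBlocks₁₁)⁻¹
  have hexit : v ⬝ᵥ (fun x => ∑ b, K.toBlocks₁₂ x b) = 1 := by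
    rw [← K.one_sub_toBlocks₁₁_mulVec_one hK1, vecMul_inv_dotProduct_mulVec hU, dotProduct_one,
      hπ1]
  have hs : 1 ≤ ∑ x, v x := one_le_sum_vecMul_inv_one_sub (fun _ _ => hK0 _ _)
    (K.toBlocks₁₁_rowSum_le_one hK0 hK1) hU hπ0 hπ1
  refine ⟨fun f => hRπ ▸ dotProduct_eq_div_of_dotProduct_eq_one hexit
    (inv_ne_zero (zero_lt_one.trans_le hs).ne') f, ?_⟩
  rw [hRπ, smul_dotProduct, hexit, smul_eq_mul, mul_one, one_div, inv_inv]
  exact dotProduct_one v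

/-- The Hill relation: `𝔼_π[∑_{n<T_B} f(Y_n)] = π(I-K_A)⁻¹ f = R(π)f / R(π)K_{AB}𝟙_B`,
and in particular `𝔼_π[T_B] = 1 / ℙ_{R(π)}(Y₁ ∈ B)`. -/
theorem stmt8 {A B : Type*} [Fintype A] [Fintype B] [DecidableEq A] [Nonempty A] [Nonempty B]
    (K : Matrix (A ⊕ B) (A ⊕ B) ℝ)
    (hK0 : ∀ i j, 0 ≤ K i j) (hK1 : ∀ i, ∑ j, K i j = 1)
    (KA : Matrix A A ℝ) (hKA : ∀ x y, KA x y = K (Sum.inl x) (Sum.inl y))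
    (KAB : Matrix A B ℝ) (hKAB : ∀ x y, KAB x y = K (Sum.inl x) (Sum.inr y))
    (hU : IsUnit (1 - KA))
    (π : A → ℝ) (hπ0 : ∀ x, 0 ≤ π x) (hπ1 : ∑ x, π x = 1)
    (Rπ : A → ℝ)
    (hRπ : Rπ = (∑ x, (π ᵥ* (1 - KA)⁻¹) x)⁻¹ • (π ᵥ* (1 - KA)⁻¹)) :
    (∀ f : A → ℝ,
      (π ᵥ* (1 - KA)⁻¹) ⬝ᵥ f = (Rπ ⬝ᵥ f) / (Rπ ⬝ᵥ fun x => ∑ b, KAB x b)) ∧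
    (π ᵥ* (1 - KA)⁻¹) ⬝ᵥ (fun _ => (1 : ℝ)) =
      1 / (Rπ ⬝ᵥ fun x => ∑ b, KAB x b) :=
  stmt8_general K hK0 hK1 KA hKA KAB hKAB hU π hπ0 hπ1 Rπ hRπ
end

section
/- Let $K$ be a stochastic matrix on finite $E = A \cup B$ with $I - K_A$ invertible, and define $R(\pi) = \pi(I - K_A)^{-1} / \pi(I-K_A)^{-1}\mathbf{1}_A$ for probability vectors $\pi$ on $A$. Then a probability vector $\pi$ is a quasi-stationary distribution for the killed process (i.e., $\pi K_A = \theta \pi$ for some $\theta \in [0,1)$) if and only if $R(\pi) = \pi$. -/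
/-!
With `N = (1 - K_A)⁻¹`, the vector `π N` is a multiple `c • π` (`c ≠ 0`) exactly when
`π (1 - K_A) = c⁻¹ • π`, i.e. when `π` is a left eigenvector of `K_A` with eigenvalue
`θ = 1 - c⁻¹`; and since `π` is a probability vector, `R(π) = π` says precisely that `π N`
is such a multiple of `π`. The eigenvalue `θ` is the total mass of `π K_A`, hence lies in
`[0, 1]` because `K_A` is substochastic, and `θ ≠ 1` because `c⁻¹ ≠ 0`.
-/
open Matrix

namespace Matrix

variable {n : Type*} [Fintype n]

theorem sum_vecMul_mem_Icc_of_substochastic {M : Matrix n n ℝ} (hM0 : ∀ i j, 0 ≤ M i j)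
    (hM1 : ∀ i, ∑ j, M i j ≤ 1) {π : n → ℝ} (hπ0 : ∀ i, 0 ≤ π i) (hπ1 : ∑ i, π i = 1) :
    ∑ j, (π ᵥ* M) j ∈ Set.Icc (0 : ℝ) 1 := by
  have hsum : ∑ j, (π ᵥ* M) j = ∑ i, π i * ∑ j, M i j := by
    simp only [vecMul, dotProduct, Finset.mul_sum]
    exact Finset.sum_comm
  rw [hsum]
  refine ⟨Finset.sum_nonneg fun i _ => mul_nonneg (hπ0 i) (Finset.sum_nonneg fun j _ => hM0 i j), ?_⟩
  calc ∑ i, π i * ∑ j, M i j ≤ ∑ i, π i :=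
        Finset.sum_le_sum fun i _ => mul_le_of_le_one_right (hπ0 i) (hM1 i)
    _ = 1 := hπ1

theorem eigenvalue_mem_Icc_of_substochastic {M : Matrix n n ℝ} (hM0 : ∀ i j, 0 ≤ M i j)
    (hM1 : ∀ i, ∑ j, M i j ≤ 1) {π : n → ℝ} (hπ0 : ∀ i, 0 ≤ π i) (hπ1 : ∑ i, π i = 1)
    {θ : ℝ} (hθ : π ᵥ* M = θ • π) : θ ∈ Set.Icc (0 : ℝ) 1 := by
  have hsum : ∑ j, (π ᵥ* M) j = θ := by
    simp only [hθ, Pi.smul_apply, smul_eq_mul, ← Finset.mul_sum, hπ1, mul_one]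
  exact hsum ▸ sum_vecMul_mem_Icc_of_substochastic hM0 hM1 hπ0 hπ1

variable {K : Type*} [Field K]

theorem vecMul_one_sub_eq_smul_iff [DecidableEq n] (M : Matrix n n K) (v : n → K) (c : K) :
    v ᵥ* (1 - M) = c • v ↔ v ᵥ* M = (1 - c) • v := by
  rw [vecMul_sub, vecMul_one, sub_smul, one_smul, sub_eq_iff_eq_add, eq_sub_iff_add_eq, add_comm]
  exact eq_comm

theorem vecMul_nonsing_inv_eq_iff [DecidableEq n] {P : Matrix n n K} (hP : IsUnit P)
    (v w : n → K) : v ᵥ* P⁻¹ = w ↔ v = w ᵥ* P := by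
  have hdet : IsUnit P.det := (isUnit_iff_isUnit_det P).mp hP
  constructor
  · rintro rfl
    rw [vecMul_vecMul, nonsing_inv_mul P hdet, vecMul_one]
  · rintro rfl
    rw [vecMul_vecMul, mul_nonsing_inv P hdet, vecMul_one]

theorem vecMul_nonsing_inv_eq_smul_iff [DecidableEq n] {P : Matrix n n K} (hP : IsUnit P)
    (v : n → K) {c : K} (hc : c ≠ 0) : v ᵥ* P⁻¹ = c • v ↔ v ᵥ* P = c⁻¹ • v := by
  rw [vecMul_nonsing_inv_eq_iff hP, smul_vecMul, eq_inv_smul_iff₀ hc, eq_comm]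

end Matrix

theorem inv_sum_smul_eq_iff {n K : Type*} [Fintype n] [Field K] {u π : n → K}
    (hπ : ∑ i, π i = 1) : (∑ i, u i)⁻¹ • u = π ↔ ∃ c : K, c ≠ 0 ∧ u = c • π := by
  constructor
  · intro h
    have hs : ∑ i, u i ≠ 0 := by
      intro h0
      rw [h0, _root_.inv_zero, zero_smul] at h
      simp [← h] at hπ
    exact ⟨∑ i, u i, hs, by rw [← h, smul_smul, mul_inv_cancel₀ hs, one_smul]⟩
  · rintro ⟨c, hc, rfl⟩
    simp only [Pi.smul_apply, smul_eq_mul, ← Finset.mul_sum, hπ, mul_one, smul_smul,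
      inv_mul_cancel₀ hc, one_smul]

theorem sum_inl_le_one_of_stochastic {A B : Type*} [Fintype A] [Fintype B]
    {K : Matrix (A ⊕ B) (A ⊕ B) ℝ} (hK0 : ∀ i j, 0 ≤ K i j) (hK1 : ∀ i, ∑ j, K i j = 1)
    (i : A ⊕ B) : ∑ y, K i (Sum.inl y) ≤ 1 := by
  have hB : 0 ≤ ∑ b, K i (Sum.inr b) := Finset.sum_nonneg fun b _ => hK0 _ _
  linarith [hK1 i, Fintype.sum_sum_type (K i)]

theorem stmt9_general {A B : Type*} [Fintype A] [Fintype B] [DecidableEq A]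
    (K : Matrix (A ⊕ B) (A ⊕ B) ℝ)
    (hK0 : ∀ i j, 0 ≤ K i j) (hK1 : ∀ i, ∑ j, K i j = 1)
    (KA : Matrix A A ℝ) (hKA : ∀ x y, KA x y = K (Sum.inl x) (Sum.inl y))
    (hU : IsUnit (1 - KA))
    (π : A → ℝ) (hπ0 : ∀ x, 0 ≤ π x) (hπ1 : ∑ x, π x = 1)
    (Rπ : A → ℝ)
    (hRπ : Rπ = (∑ x, (π ᵥ* (1 - KA)⁻¹) x)⁻¹ • (π ᵥ* (1 - KA)⁻¹)) :
    (∃ θ : ℝ, 0 ≤ θ ∧ θ < 1 ∧ π ᵥ* KA = θ • π) ↔ Rπ = π := by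
  have hKA0 : ∀ x y, 0 ≤ KA x y := fun x y => hKA x y ▸ hK0 _ _
  have hKA1 : ∀ x, ∑ y, KA x y ≤ 1 := fun x => by
    simpa only [hKA] using sum_inl_le_one_of_stochastic hK0 hK1 (Sum.inl x)
  rw [hRπ, inv_sum_smul_eq_iff hπ1]
  constructor
  · rintro ⟨θ, -, hθ1, hθ⟩
    have hθ' : 1 - θ ≠ 0 := sub_ne_zero.mpr hθ1.ne'
    refine ⟨(1 - θ)⁻¹, inv_ne_zero hθ', ?_⟩
    rw [vecMul_nonsing_inv_eq_smul_iff hU π (inv_ne_zero hθ'), inv_inv,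
      vecMul_one_sub_eq_smul_iff, sub_sub_cancel, hθ]
  · rintro ⟨c, hc, hfix⟩
    rw [vecMul_nonsing_inv_eq_smul_iff hU π hc, vecMul_one_sub_eq_smul_iff] at hfix
    obtain ⟨hθ0, hθ1⟩ := eigenvalue_mem_Icc_of_substochastic hKA0 hKA1 hπ0 hπ1 hfix
    exact ⟨1 - c⁻¹, hθ0, lt_of_le_of_ne hθ1 (by simpa using hc), hfix⟩

/-- A probability vector `π` on `A` is a quasi-stationary distribution for the killed
process (`π K_A = θ π` for some `θ ∈ [0,1)`) iff it is a fixed point of the return map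
`R(π) = π(I - K_A)⁻¹ / π(I-K_A)⁻¹𝟙`. -/
theorem stmt9 {A B : Type*} [Fintype A] [Fintype B] [DecidableEq A] [Nonempty A] [Nonempty B]
    (K : Matrix (A ⊕ B) (A ⊕ B) ℝ)
    (hK0 : ∀ i j, 0 ≤ K i j) (hK1 : ∀ i, ∑ j, K i j = 1)
    (KA : Matrix A A ℝ) (hKA : ∀ x y, KA x y = K (Sum.inl x) (Sum.inl y))
    (hU : IsUnit (1 - KA))
    (π : A → ℝ) (hπ0 : ∀ x, 0 ≤ π x) (hπ1 : ∑ x, π x = 1)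
    (Rπ : A → ℝ)
    (hRπ : Rπ = (∑ x, (π ᵥ* (1 - KA)⁻¹) x)⁻¹ • (π ᵥ* (1 - KA)⁻¹)) :
    (∃ θ : ℝ, 0 ≤ θ ∧ θ < 1 ∧ π ᵥ* KA = θ • π) ↔ Rπ = π :=
  stmt9_general K hK0 hK1 KA hKA hU π hπ0 hπ1 Rπ hRπ
end

section
/- Let $K$ be a stochastic matrix on finite $E = A \cup B$ with invariant probability $\pi_0$, $\pi_0(A) > 0$, $I - K_A$ invertible, and let $\nu_Q$ be a quasi-stationary distribution ($\nu_Q K_A = (1-p)\nu_Q$). Define $\nu_E = \frac{\pi_{0|A}(I - K_A)}{\pi_{0|A} K_{AB}\mathbf{1}_B}$, $H_Q = (I-K_A)^{-1}(I - \mathbf{1}_A \otimes \nu_Q)$, and $T^E_Q = \|\nu_E H_Q\|$ (total variation norm of the signed measure $\nu_E H_Q$, i.e., the $\ell^1$ norm of the row vector). Then $\|\pi_{0|A} - \nu_Q\| = (\pi_{0|A} K_{AB}\mathbf{1}_B) \cdot T^E_Q$. -/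
/-!
Since `I - 𝟙_A ⊗ ν_Q` maps a row vector `μ` to `μ - (μ 𝟙) ν_Q`, and `π_{0|A}` is a probability
vector, `ν_E H_Q = π_{0|A} (I - K_A)(I - K_A)⁻¹ (I - 𝟙_A ⊗ ν_Q) / flux = (π_{0|A} - ν_Q) / flux`.
Taking `ℓ¹` norms gives the identity.
-/

open Matrix

namespace Matrix

variable {ι R : Type*} [Fintype ι] [DecidableEq ι] [CommRing R]

theorem vecMul_one_sub_of_const_rows (μ ν : ι → R) :
    μ ᵥ* (1 - Matrix.of fun _ y => ν y) = μ - (∑ x, μ x) • ν := by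
  rw [vecMul_sub, vecMul_one]
  ext y
  simp only [Pi.sub_apply, Pi.smul_apply, smul_eq_mul, vecMul, dotProduct, of_apply,
    Finset.sum_mul]

theorem vecMul_vecMul_nonsing_inv_mul {M : Matrix ι ι R} (hM : IsUnit M) (μ : ι → R)
    (N : Matrix ι ι R) : μ ᵥ* M ᵥ* (M⁻¹ * N) = μ ᵥ* N := by
  rw [vecMul_vecMul, ← Matrix.mul_assoc,
    mul_nonsing_inv M ((isUnit_iff_isUnit_det M).mp hM), Matrix.one_mul]

end Matrix

theorem sum_inv_sum_smul {ι 𝕜 : Type*} [Fintype ι] [DivisionRing 𝕜] (v : ι → 𝕜)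
    (hv : ∑ x, v x ≠ 0) :
    ∑ x, ((∑ y, v y)⁻¹ • v) x = 1 := by
  simp only [Pi.smul_apply, smul_eq_mul, ← Finset.mul_sum, inv_mul_cancel₀ hv]

theorem sum_abs_smul {ι : Type*} [Fintype ι] (c : ℝ) (v : ι → ℝ) :
    ∑ x, |(c • v) x| = |c| * ∑ x, |v x| := by
  simp only [Pi.smul_apply, smul_eq_mul, abs_mul, Finset.mul_sum]

theorem stmt11_general {A B : Type*} [Fintype A] [DecidableEq A]
    (π0 : A ⊕ B → ℝ)
    (hA : 0 < ∑ x : A, π0 (Sum.inl x))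
    (KA : Matrix A A ℝ)
    (hU : IsUnit (1 - KA))
    (νQ : A → ℝ)
    (πc : A → ℝ) (hπc : πc = (∑ x : A, π0 (Sum.inl x))⁻¹ • fun x => π0 (Sum.inl x))
    (flux : ℝ) (hfluxpos : 0 < flux)
    (νE : A → ℝ) (hνE : νE = flux⁻¹ • (πc ᵥ* (1 - KA)))
    (HQ : Matrix A A ℝ)
    (hHQ : HQ = (1 - KA)⁻¹ * (1 - Matrix.of fun _ y => νQ y))
    (TEQ : ℝ) (hTEQ : TEQ = ∑ x, |(νE ᵥ* HQ) x|) :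
    ∑ x, |πc x - νQ x| = flux * TEQ := by
  have hπc_sum : ∑ x, πc x = 1 := hπc ▸ sum_inv_sum_smul (fun x => π0 (Sum.inl x)) hA.ne'
  have hνE_HQ : νE ᵥ* HQ = flux⁻¹ • (πc - νQ) := by
    rw [hνE, hHQ, smul_vecMul, vecMul_vecMul_nonsing_inv_mul hU,
      vecMul_one_sub_of_const_rows, hπc_sum, one_smul]
  rw [hTEQ, hνE_HQ, sum_abs_smul, abs_of_pos (inv_pos.mpr hfluxpos), ← mul_assoc,
    mul_inv_cancel₀ hfluxpos.ne', one_mul]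
  rfl

/-- `‖π_{0|A} - ν_Q‖_{TV} = ℙ_{π_{0|A}}(Y₁ ∈ B) · T^E_Q`, where
`T^E_Q = ‖ν_E H_Q‖_{TV}` with `ν_E = π_{0|A}(I-K_A)/ℙ_{π_{0|A}}(Y₁ ∈ B)` and
`H_Q = (I-K_A)⁻¹(I - 𝟙_A ⊗ ν_Q)`. -/
theorem stmt11 {A B : Type*} [Fintype A] [Fintype B] [DecidableEq A] [Nonempty A] [Nonempty B]
    (K : Matrix (A ⊕ B) (A ⊕ B) ℝ)
    (hK0 : ∀ i j, 0 ≤ K i j) (hK1 : ∀ i, ∑ j, K i j = 1)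
    (π0 : A ⊕ B → ℝ) (hπnn : ∀ i, 0 ≤ π0 i) (hπ1 : ∑ i, π0 i = 1)
    (hstat : π0 ᵥ* K = π0)
    (hA : 0 < ∑ x : A, π0 (Sum.inl x))
    (KA : Matrix A A ℝ) (hKA : ∀ x y, KA x y = K (Sum.inl x) (Sum.inl y))
    (KAB : Matrix A B ℝ) (hKAB : ∀ x y, KAB x y = K (Sum.inl x) (Sum.inr y))
    (hU : IsUnit (1 - KA))
    (νQ : A → ℝ) (hν0 : ∀ x, 0 ≤ νQ x) (hν1 : ∑ x, νQ x = 1)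
    (p : ℝ) (heig : νQ ᵥ* KA = (1 - p) • νQ)
    (πc : A → ℝ) (hπc : πc = (∑ x : A, π0 (Sum.inl x))⁻¹ • fun x => π0 (Sum.inl x))
    (flux : ℝ) (hflux : flux = ∑ x, πc x * ∑ b, KAB x b) (hfluxpos : 0 < flux)
    (νE : A → ℝ) (hνE : νE = flux⁻¹ • (πc ᵥ* (1 - KA)))
    (HQ : Matrix A A ℝ)
    (hHQ : HQ = (1 - KA)⁻¹ * (1 - Matrix.of fun _ y => νQ y))
    (TEQ : ℝ) (hTEQ : TEQ = ∑ x, |(νE ᵥ* HQ) x|) :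
    ∑ x, |πc x - νQ x| = flux * TEQ :=
  stmt11_general π0 hA KA hU νQ πc hπc flux hfluxpos νE hνE HQ hHQ TEQ hTEQ
end

section
/- Let $M$ and $m$ be positive reals with $M/m \leq e^\Delta$ for some $\Delta > 0$. Define $\varphi(y) = \frac{y}{m+y} - \frac{y}{M+y}$ for $y \geq 0$. Then $\sup_{y \geq 0} \varphi(y) = \frac{\sqrt{M} - \sqrt{m}}{\sqrt{M} + \sqrt{m}} \leq \tanh(\Delta/4)$. -/
/-!
With `s = √m` and `t = √M`, the function `φ y = y / (s² + y) - y / (t² + y)` satisfies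
`(t - s) / (t + s) - φ y = (t - s) (y - s t)² / ((t + s) (s² + y) (t² + y))`,
so for `s ≤ t` it is maximal at `y = s t = √(m M)`. For positive denominators,
`(t - s) / (t + s) ≤ (a - b) / (a + b)` amounts to `t b ≤ s a`; with `a = e^(Δ/4)`, `b = e^(-Δ/4)`
this is `√M ≤ e^(Δ/2) √m`, i.e. `M ≤ e^Δ m`.
-/

open Real

lemma sub_div_add_sub_eq_mul_sq_div {s t y : ℝ} (hs : s ^ 2 + y ≠ 0) (ht : t ^ 2 + y ≠ 0)
    (hst : t + s ≠ 0) :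
    (t - s) / (t + s) - (y / (s ^ 2 + y) - y / (t ^ 2 + y)) =
      (t - s) * (y - s * t) ^ 2 / ((t + s) * (s ^ 2 + y) * (t ^ 2 + y)) := by
  field_simp
  ring

lemma div_add_sub_div_add_le {m M y : ℝ} (hm : 0 < m) (hmM : m ≤ M) (hy : 0 ≤ y) :
    y / (m + y) - y / (M + y) ≤ (√M - √m) / (√M + √m) := by
  have hM : 0 < M := hm.trans_le hmM
  have hs : 0 < √m := sqrt_pos.2 hm
  have ht : 0 < √M := sqrt_pos.2 hM
  have gap := sub_div_add_sub_eq_mul_sq_div (s := √m) (t := √M) (y := y)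
    (by positivity) (by positivity) (by positivity)
  rw [sq_sqrt hm.le, sq_sqrt hM.le] at gap
  rw [← sub_nonneg, gap]
  exact div_nonneg (mul_nonneg (sub_nonneg.2 (sqrt_le_sqrt hmM)) (sq_nonneg _)) (by positivity)

lemma div_add_sub_div_add_sqrt_mul {m M : ℝ} (hm : 0 < m) (hM : 0 < M) :
    √(m * M) / (m + √(m * M)) - √(m * M) / (M + √(m * M)) = (√M - √m) / (√M + √m) := by
  have hs : 0 < √m := sqrt_pos.2 hm
  have ht : 0 < √M := sqrt_pos.2 hM
  have gap := sub_div_add_sub_eq_mul_sq_div (s := √m) (t := √M) (y := √m * √M)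
    (by positivity) (by positivity) (by positivity)
  rw [sq_sqrt hm.le, sq_sqrt hM.le, sub_self, zero_pow two_ne_zero, mul_zero, zero_div,
    sub_eq_zero] at gap
  rw [sqrt_mul hm.le, gap]

lemma sub_div_add_le_sub_div_add {a b s t : ℝ} (hst : 0 < t + s) (hab : 0 < a + b)
    (h : t * b ≤ s * a) : (t - s) / (t + s) ≤ (a - b) / (a + b) := by
  rw [div_le_div_iff₀ hst hab]
  linarith

lemma sqrt_le_exp_half_mul_sqrt {m M Δ : ℝ} (hm : 0 < m) (h : M / m ≤ exp Δ) :
    √M ≤ exp (Δ / 2) * √m := by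
  rw [exp_half, ← sqrt_mul (exp_pos Δ).le]
  exact sqrt_le_sqrt ((div_le_iff₀ hm).1 h)

lemma sqrt_sub_div_sqrt_add_le_tanh {m M Δ : ℝ} (hm : 0 < m) (h : M / m ≤ exp Δ) :
    (√M - √m) / (√M + √m) ≤ tanh (Δ / 4) := by
  have hs : 0 < √m := sqrt_pos.2 hm
  rw [tanh_eq]
  refine sub_div_add_le_sub_div_add (by positivity) (by positivity) ?_
  calc √M * exp (-(Δ / 4)) ≤ exp (Δ / 2) * √m * exp (-(Δ / 4)) :=
        mul_le_mul_of_nonneg_right (sqrt_le_exp_half_mul_sqrt hm h) (exp_pos _).le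
    _ = √m * exp (Δ / 4) := by
        rw [mul_right_comm, ← exp_add, mul_comm]
        ring_nf

theorem stmt17_general (m M Δ : ℝ) (hm : 0 < m) (hmM : m ≤ M)
    (hR : M / m ≤ Real.exp Δ)
    (φ : ℝ → ℝ) (hφ : ∀ y, φ y = y / (m + y) - y / (M + y)) :
    (∀ y, 0 ≤ y → φ y ≤ (Real.sqrt M - Real.sqrt m) / (Real.sqrt M + Real.sqrt m)) ∧
    φ (Real.sqrt (m * M)) =
      (Real.sqrt M - Real.sqrt m) / (Real.sqrt M + Real.sqrt m) ∧
    (Real.sqrt M - Real.sqrt m) / (Real.sqrt M + Real.sqrt m) ≤ Real.tanh (Δ / 4) := by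
  refine ⟨fun y hy => ?_, ?_, sqrt_sub_div_sqrt_add_le_tanh hm hR⟩
  · rw [hφ]
    exact div_add_sub_div_add_le hm hmM hy
  · rw [hφ]
    exact div_add_sub_div_add_sqrt_mul hm (hm.trans_le hmM)

/-- For `0 < m ≤ M` with `M/m ≤ e^Δ`, the function
`φ(y) = y/(m+y) - y/(M+y)` attains its supremum over `[0,∞)` at `y = √(mM)`, with
`sup φ = (√M - √m)/(√M + √m) ≤ tanh(Δ/4)`. -/
theorem stmt17 (m M Δ : ℝ) (hm : 0 < m) (hM : 0 < M) (hmM : m ≤ M)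
    (hΔ : 0 < Δ) (hR : M / m ≤ Real.exp Δ)
    (φ : ℝ → ℝ) (hφ : ∀ y, φ y = y / (m + y) - y / (M + y)) :
    (∀ y, 0 ≤ y → φ y ≤ (Real.sqrt M - Real.sqrt m) / (Real.sqrt M + Real.sqrt m)) ∧
    φ (Real.sqrt (m * M)) =
      (Real.sqrt M - Real.sqrt m) / (Real.sqrt M + Real.sqrt m) ∧
    (Real.sqrt M - Real.sqrt m) / (Real.sqrt M + Real.sqrt m) ≤ Real.tanh (Δ / 4) :=
  stmt17_general m M Δ hm hmM hR φ hφ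
end

section
/- (Birkhoff contraction under the two-sided condition, finite setting) Let $K$ be an $n \times n$ matrix with entries satisfying $s_x \pi_y \leq K_{xy} \leq R\, s_x \pi_y$ for all $x,y$, where $s \in \mathbb{R}^n_{>0}$, $\pi$ a strictly positive probability vector, and $R \geq 1$. Then for all strictly positive vectors $\lambda, \nu \in \mathbb{R}^n_{>0}$: $\Theta(\lambda K, \nu K) \leq 2 \ln R$, where $\Theta(\lambda,\nu) = \ln\left(\max_i(\nu_i/\lambda_i) / \min_i(\nu_i/\lambda_i)\right)$ is the Hilbert projective metric and $\lambda K$ denotes the row vector $(\sum_x \lambda_x K_{xy})_y$. -/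
open Matrix BigOperators

/-- The Hilbert projective metric on positive vectors:
`Θ(λ,ν) = log(max_i(ν_i/λ_i) / min_i(ν_i/λ_i))`. -/
noncomputable def hilbertTheta {n : ℕ} (l v : Fin n → ℝ) : ℝ :=
  Real.log ((⨆ i, v i / l i) / (⨅ i, v i / l i))

/-!
Write `c = ⟨s,ν⟩ / ⟨s,λ⟩`. Since every column of `K` lies between `π_y s` and `R π_y s`, the
vectors `λK` and `νK` are both sandwiched between multiples of the single vector `π`, which gives
`c / R • λK ≤ νK ≤ R c • λK` componentwise. Every ratio `(νK)_y / (λK)_y` therefore lies in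
`[c / R, R c]`, and the Hilbert metric is at most `log ((R c) / (c / R)) = 2 log R`.
-/

theorem hilbertTheta_le_log_div {n : ℕ} [Nonempty (Fin n)] {l v : Fin n → ℝ} {a b : ℝ}
    (hl : ∀ i, 0 < l i) (ha : 0 < a) (hlow : ∀ i, a * l i ≤ v i) (hup : ∀ i, v i ≤ b * l i) :
    hilbertTheta l v ≤ Real.log (b / a) := by
  have hratio_low : ∀ i, a ≤ v i / l i := fun i => (le_div_iff₀ (hl i)).2 (hlow i)
  have hratio_up : ∀ i, v i / l i ≤ b := fun i => (div_le_iff₀ (hl i)).2 (hup i)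
  have hinf : a ≤ ⨅ i, v i / l i := le_ciInf hratio_low
  have hsup : (⨆ i, v i / l i) ≤ b := ciSup_le hratio_up
  have hinf_le_sup : (⨅ i, v i / l i) ≤ ⨆ i, v i / l i :=
    ciInf_le_ciSup (Set.finite_range _).bddBelow (Set.finite_range _).bddAbove
  have hinf_pos : 0 < ⨅ i, v i / l i := ha.trans_le hinf
  have hsup_pos : 0 < ⨆ i, v i / l i := hinf_pos.trans_le hinf_le_sup
  exact Real.log_le_log (div_pos hsup_pos hinf_pos)
    (div_le_div₀ (hsup_pos.le.trans hsup) hsup ha hinf)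

section RankOneSandwich

variable {m n : Type*} [Fintype m] {K : Matrix m n ℝ} {s : m → ℝ} {π : n → ℝ} {R : ℝ}
  {l : m → ℝ}

theorem mul_dotProduct_le_vecMul (hlow : ∀ x y, s x * π y ≤ K x y) (hl : 0 ≤ l) (y : n) :
    π y * (l ⬝ᵥ s) ≤ (l ᵥ* K) y := by
  rw [← smul_eq_mul, ← dotProduct_smul, vecMul_apply]
  exact dotProduct_le_dotProduct_of_nonneg_left (fun x => by simpa [mul_comm] using hlow x y) hl

theorem vecMul_le_mul_dotProduct (hup : ∀ x y, K x y ≤ R * s x * π y) (hl : 0 ≤ l) (y : n) :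
    (l ᵥ* K) y ≤ R * π y * (l ⬝ᵥ s) := by
  rw [← smul_eq_mul, ← dotProduct_smul, vecMul_apply]
  refine dotProduct_le_dotProduct_of_nonneg_left (fun x => ?_) hl
  simpa [mul_comm, mul_left_comm, mul_assoc] using hup x y

variable {v : m → ℝ}

theorem vecMul_le_mul_vecMul (hlow : ∀ x y, s x * π y ≤ K x y)
    (hup : ∀ x y, K x y ≤ R * s x * π y) (hR : 0 ≤ R) (hs : 0 ≤ s) (hl : 0 ≤ l)
    (hls : 0 < l ⬝ᵥ s) (hv : 0 ≤ v) (y : n) :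
    (v ᵥ* K) y ≤ R * ((v ⬝ᵥ s) / (l ⬝ᵥ s)) * (l ᵥ* K) y := by
  have hvs : 0 ≤ v ⬝ᵥ s := dotProduct_nonneg_of_nonneg hv hs
  calc (v ᵥ* K) y ≤ R * π y * (v ⬝ᵥ s) := vecMul_le_mul_dotProduct hup hv y
    _ = R * ((v ⬝ᵥ s) / (l ⬝ᵥ s)) * (π y * (l ⬝ᵥ s)) := by field_simp
    _ ≤ R * ((v ⬝ᵥ s) / (l ⬝ᵥ s)) * (l ᵥ* K) y := by
      gcongr
      exact mul_dotProduct_le_vecMul hlow hl y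

theorem div_mul_vecMul_le_vecMul (hlow : ∀ x y, s x * π y ≤ K x y)
    (hup : ∀ x y, K x y ≤ R * s x * π y) (hR : 0 < R) (hs : 0 ≤ s) (hl : 0 ≤ l)
    (hls : 0 < l ⬝ᵥ s) (hv : 0 ≤ v) (y : n) :
    (v ⬝ᵥ s) / (l ⬝ᵥ s) / R * (l ᵥ* K) y ≤ (v ᵥ* K) y := by
  have hvs : 0 ≤ v ⬝ᵥ s := dotProduct_nonneg_of_nonneg hv hs
  calc (v ⬝ᵥ s) / (l ⬝ᵥ s) / R * (l ᵥ* K) y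
      ≤ (v ⬝ᵥ s) / (l ⬝ᵥ s) / R * (R * π y * (l ⬝ᵥ s)) := by
        gcongr
        exact vecMul_le_mul_dotProduct hup hl y
    _ = π y * (v ⬝ᵥ s) := by field_simp
    _ ≤ (v ᵥ* K) y := mul_dotProduct_le_vecMul hlow hv y

end RankOneSandwich

theorem stmt19_general {n : ℕ} (hn : 0 < n) (K : Matrix (Fin n) (Fin n) ℝ)
    (s π : Fin n → ℝ) (hs : ∀ x, 0 < s x) (hπ : ∀ x, 0 < π x)
    (R : ℝ) (hR : 1 ≤ R)
    (hlow : ∀ x y, s x * π y ≤ K x y) (hup : ∀ x y, K x y ≤ R * s x * π y)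
    (l v : Fin n → ℝ) (hl : ∀ i, 0 < l i) (hv : ∀ i, 0 < v i) :
    hilbertTheta (l ᵥ* K) (v ᵥ* K) ≤ 2 * Real.log R := by
  have : Nonempty (Fin n) := Fin.pos_iff_nonempty.mp hn
  have hR0 : 0 < R := one_pos.trans_le hR
  have hs' : 0 ≤ s := fun x => (hs x).le
  have hl' : 0 ≤ l := fun x => (hl x).le
  have hv' : 0 ≤ v := fun x => (hv x).le
  have hls : 0 < l ⬝ᵥ s := Finset.sum_pos (fun x _ => mul_pos (hl x) (hs x)) Finset.univ_nonempty
  have hvs : 0 < v ⬝ᵥ s := Finset.sum_pos (fun x _ => mul_pos (hv x) (hs x)) Finset.univ_nonempty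
  have hlK : ∀ y, 0 < (l ᵥ* K) y := fun y =>
    (mul_pos (hπ y) hls).trans_le (mul_dotProduct_le_vecMul hlow hl' y)
  set c := (v ⬝ᵥ s) / (l ⬝ᵥ s)
  have hc : 0 < c := div_pos hvs hls
  calc hilbertTheta (l ᵥ* K) (v ᵥ* K) ≤ Real.log (R * c / (c / R)) :=
        hilbertTheta_le_log_div hlK (div_pos hc hR0)
          (div_mul_vecMul_le_vecMul hlow hup hR0 hs' hl' hls hv')
          (vecMul_le_mul_vecMul hlow hup hR0.le hs' hl' hls hv')
    _ = 2 * Real.log R := by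
      rw [show R * c / (c / R) = R ^ 2 by field_simp, Real.log_pow, Nat.cast_ofNat]

/-- Birkhoff contraction under the two-sided condition: if
`s_x π_y ≤ K_{xy} ≤ R s_x π_y` for all `x, y`, with `s, π > 0`, `π` a probability
vector and `R ≥ 1`, then `Θ(λK, νK) ≤ 2 log R` for all strictly positive `λ, ν`. -/
theorem stmt19 {n : ℕ} (hn : 0 < n) (K : Matrix (Fin n) (Fin n) ℝ)
    (s π : Fin n → ℝ) (hs : ∀ x, 0 < s x) (hπ : ∀ x, 0 < π x) (hπ1 : ∑ x, π x = 1)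
    (R : ℝ) (hR : 1 ≤ R)
    (hlow : ∀ x y, s x * π y ≤ K x y) (hup : ∀ x y, K x y ≤ R * s x * π y)
    (l v : Fin n → ℝ) (hl : ∀ i, 0 < l i) (hv : ∀ i, 0 < v i) :
    hilbertTheta (l ᵥ* K) (v ᵥ* K) ≤ 2 * Real.log R :=
  stmt19_general hn K s π hs hπ R hR hlow hup l v hl hv
end
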